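/- Let x₁, …, x_n ∈ ℝ^d, ε > 0, and let K be the Gibbs kernel K_{ij} = exp(−‖xᵢ − xⱼ‖²/(2ε)). For α, β ∈ [0,∞)ⁿ define the discrete entropy-regularized optimal transport cost OT_ε(α, β) = inf{ε·Σ_{ij} γ_{ij}·log(γ_{ij}/K_{ij}) − ε·Σ_{ij} γ_{ij} : γ ∈ Π(α,β)}. Then for all u, v ∈ ℝⁿ, sup{⟨u,α⟩ + ⟨v,β⟩ − OT_ε(α,β) : α, β ∈ [0,∞)ⁿ} = ε·Σ_{ij} exp(uᵢ/ε)·K_{ij}·exp(vⱼ/ε). -/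

import Mathlib

open scoped ENNReal NNReal Classical BigOperators

/-- The Gibbs kernel `K_{ij} = exp(−‖xᵢ − xⱼ‖²/(2ε))`. -/
noncomputable def gibbsK {n d : ℕ} (x : Fin n → EuclideanSpace ℝ (Fin d)) (ε : ℝ)
    (i j : Fin n) : ℝ :=
  Real.exp (-‖x i - x j‖ ^ 2 / (2 * ε))

/-- The discrete entropy-regularized optimal transport cost
`OT_ε(α, β) = inf {ε·Σ_{ij} γ_{ij}·log(γ_{ij}/K_{ij}) − ε·Σ_{ij} γ_{ij} : γ ∈ Π(α,β)}`
(the infimum over the empty set being `+∞`).  Terms with `γ_{ij} = 0` contribute `0`. -/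
noncomputable def OTeps {n d : ℕ} (x : Fin n → EuclideanSpace ℝ (Fin d)) (ε : ℝ)
    (α β : Fin n → ℝ≥0) : EReal :=
  ⨅ γ : {γ : Fin n → Fin n → ℝ≥0 //
      (∀ i, ∑ j, γ i j = α i) ∧ (∀ j, ∑ i, γ i j = β j)},
    ((ε * ∑ i, ∑ j, (γ.1 i j : ℝ) * Real.log ((γ.1 i j : ℝ) / gibbsK x ε i j)
        - ε * ∑ i, ∑ j, (γ.1 i j : ℝ) : ℝ) : EReal)

/-!
The pairing `⟨u,α⟩ + ⟨v,β⟩` of the marginals of a plan `γ` is `Σᵢⱼ (uᵢ + vⱼ) γᵢⱼ`, so the conjugate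
decouples entry by entry into the scalar Fenchel inequality
`c t − ε (t log (t/K) − t) ≤ ε K e^{c/ε}`, which is `1 + s ≤ eˢ` at `s = c/ε − log (t/K)`.
Equality holds at `t = K e^{c/ε}`, so the supremum is attained by the Gibbs plan
`γᵢⱼ = e^{uᵢ/ε} Kᵢⱼ e^{vⱼ/ε}` together with its own marginals.
-/

namespace EntropicOT

lemma mul_sub_entropy_le {ε K t : ℝ} (c : ℝ) (hε : 0 < ε) (hK : 0 < K) (ht : 0 ≤ t) :
    c * t - ε * (t * Real.log (t / K) - t) ≤ ε * (K * Real.exp (c / ε)) := by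
  rcases ht.eq_or_lt with rfl | ht
  · simp only [zero_div, Real.log_zero, mul_zero, sub_zero]
    positivity
  have hexp : Real.exp (c / ε - Real.log (t / K)) = K / t * Real.exp (c / ε) := by
    rw [Real.exp_sub, Real.exp_log (by positivity)]
    field_simp
  calc c * t - ε * (t * Real.log (t / K) - t)
      = ε * t * (c / ε - Real.log (t / K) + 1) := by field_simp; ring
    _ ≤ ε * t * Real.exp (c / ε - Real.log (t / K)) := by
      gcongr
      exact Real.add_one_le_exp _
    _ = ε * (K * Real.exp (c / ε)) := by rw [hexp]; field_simp

lemma mul_sub_entropy_eq {ε K : ℝ} (c : ℝ) (hε : 0 < ε) (hK : 0 < K) :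
    c * (K * Real.exp (c / ε))
        - ε * (K * Real.exp (c / ε) * Real.log (K * Real.exp (c / ε) / K)
          - K * Real.exp (c / ε))
      = ε * (K * Real.exp (c / ε)) := by
  rw [mul_div_cancel_left₀ _ hK.ne', Real.log_exp]
  field_simp
  ring

variable {ι κ : Type*}

noncomputable def gibbsPlan (K : ι → κ → ℝ) (ε : ℝ) (w : ι → κ → ℝ) : ι → κ → ℝ≥0 :=
  fun i j => (K i j * Real.exp (w i j / ε)).toNNReal

lemma coe_gibbsPlan {K : ι → κ → ℝ} (hK : ∀ i j, 0 < K i j) (ε : ℝ) (w : ι → κ → ℝ) (i : ι)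
    (j : κ) : (gibbsPlan K ε w i j : ℝ) = K i j * Real.exp (w i j / ε) :=
  Real.coe_toNNReal _ (by have := hK i j; positivity)

variable [Fintype ι] [Fintype κ]

noncomputable def entropicCost (K : ι → κ → ℝ) (ε : ℝ) (γ : ι → κ → ℝ≥0) : ℝ :=
  ε * ∑ i, ∑ j, (γ i j : ℝ) * Real.log ((γ i j : ℝ) / K i j) - ε * ∑ i, ∑ j, (γ i j : ℝ)

lemma sum_mul_add_sum_mul_eq_of_marginals {α : ι → ℝ≥0} {β : κ → ℝ≥0} {γ : ι → κ → ℝ≥0}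
    (hα : ∀ i, ∑ j, γ i j = α i) (hβ : ∀ j, ∑ i, γ i j = β j) (u : ι → ℝ) (v : κ → ℝ) :
    ∑ i, u i * (α i : ℝ) + ∑ j, v j * (β j : ℝ) = ∑ i, ∑ j, (u i + v j) * (γ i j : ℝ) := by
  simp only [← hα, ← hβ, NNReal.coe_sum, Finset.mul_sum, add_mul, Finset.sum_add_distrib]
  rw [Finset.sum_comm (f := fun j i => v j * (γ i j : ℝ))]

lemma pairing_sub_entropicCost_eq_sum (K : ι → κ → ℝ) (ε : ℝ) (w : ι → κ → ℝ)
    (γ : ι → κ → ℝ≥0) :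
    ∑ i, ∑ j, w i j * (γ i j : ℝ) - entropicCost K ε γ
      = ∑ i, ∑ j, (w i j * γ i j - ε * (γ i j * Real.log (γ i j / K i j) - γ i j)) := by
  simp only [entropicCost, mul_sub, Finset.mul_sum, Finset.sum_sub_distrib]

lemma pairing_sub_entropicCost_le {K : ι → κ → ℝ} (hK : ∀ i j, 0 < K i j) {ε : ℝ}
    (hε : 0 < ε) (w : ι → κ → ℝ) (γ : ι → κ → ℝ≥0) :
    ∑ i, ∑ j, w i j * (γ i j : ℝ) - entropicCost K ε γ
      ≤ ε * ∑ i, ∑ j, K i j * Real.exp (w i j / ε) := by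
  rw [pairing_sub_entropicCost_eq_sum, Finset.mul_sum]
  refine Finset.sum_le_sum fun i _ => ?_
  rw [Finset.mul_sum]
  exact Finset.sum_le_sum fun j _ => mul_sub_entropy_le _ hε (hK i j) (γ i j).coe_nonneg

lemma pairing_sub_entropicCost_gibbsPlan {K : ι → κ → ℝ} (hK : ∀ i j, 0 < K i j) {ε : ℝ}
    (hε : 0 < ε) (w : ι → κ → ℝ) :
    ∑ i, ∑ j, w i j * (gibbsPlan K ε w i j : ℝ) - entropicCost K ε (gibbsPlan K ε w)
      = ε * ∑ i, ∑ j, K i j * Real.exp (w i j / ε) := by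
  rw [pairing_sub_entropicCost_eq_sum, Finset.mul_sum]
  refine Finset.sum_congr rfl fun i _ => ?_
  rw [Finset.mul_sum]
  refine Finset.sum_congr rfl fun j _ => ?_
  rw [coe_gibbsPlan hK]
  exact mul_sub_entropy_eq _ hε (hK i j)

end EntropicOT

open EntropicOT

lemma OTeps_eq_iInf_entropicCost {n d : ℕ} (x : Fin n → EuclideanSpace ℝ (Fin d)) (ε : ℝ)
    (α β : Fin n → ℝ≥0) :
    OTeps x ε α β = ⨅ γ : {γ : Fin n → Fin n → ℝ≥0 //
      (∀ i, ∑ j, γ i j = α i) ∧ (∀ j, ∑ i, γ i j = β j)},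
      (entropicCost (gibbsK x ε) ε γ.1 : EReal) :=
  rfl

theorem OTeps_conjugate (n d : ℕ) (x : Fin n → EuclideanSpace ℝ (Fin d))
    (ε : ℝ) (hε : 0 < ε) (u v : Fin n → ℝ) :
    (⨆ (α : Fin n → ℝ≥0) (β : Fin n → ℝ≥0),
        ((((∑ i, u i * (α i : ℝ)) + ∑ i, v i * (β i : ℝ) : ℝ) : EReal) - OTeps x ε α β))
    = ((ε * ∑ i, ∑ j, Real.exp (u i / ε) * gibbsK x ε i j * Real.exp (v j / ε) : ℝ) : EReal) := by
  have hK : ∀ i j, 0 < gibbsK x ε i j := fun i j => Real.exp_pos _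
  set w : Fin n → Fin n → ℝ := fun i j => u i + v j
  set R := ε * ∑ i, ∑ j, Real.exp (u i / ε) * gibbsK x ε i j * Real.exp (v j / ε)
  have hR : R = ε * ∑ i, ∑ j, gibbsK x ε i j * Real.exp (w i j / ε) := by
    refine congrArg (ε * ·) (Finset.sum_congr rfl fun i _ => Finset.sum_congr rfl fun j _ => ?_)
    rw [add_div, Real.exp_add]
    ring
  apply le_antisymm
  · refine iSup₂_le fun α β => ?_
    have hcost :
        ((∑ i, u i * (α i : ℝ) + ∑ i, v i * (β i : ℝ) - R : ℝ) : EReal) ≤ OTeps x ε α β := by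
      rw [OTeps_eq_iInf_entropicCost]
      refine le_iInf fun γ => EReal.coe_le_coe_iff.mpr ?_
      rw [sum_mul_add_sum_mul_eq_of_marginals γ.2.1 γ.2.2, hR]
      exact sub_le_comm.mp (pairing_sub_entropicCost_le hK hε w γ.1)
    refine (EReal.sub_le_sub le_rfl hcost).trans_eq ?_
    rw [← EReal.coe_sub, sub_sub_cancel]
  · set γ := gibbsPlan (gibbsK x ε) ε w
    refine le_iSup₂_of_le (fun i => ∑ j, γ i j) (fun j => ∑ i, γ i j) ?_
    have hcost : OTeps x ε (fun i => ∑ j, γ i j) (fun j => ∑ i, γ i j)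
        ≤ (entropicCost (gibbsK x ε) ε γ : EReal) := by
      rw [OTeps_eq_iInf_entropicCost]
      exact iInf_le_of_le ⟨γ, fun _ => rfl, fun _ => rfl⟩ le_rfl
    refine le_of_eq_of_le ?_ (EReal.sub_le_sub le_rfl hcost)
    rw [← EReal.coe_sub, sum_mul_add_sum_mul_eq_of_marginals (fun _ => rfl) (fun _ => rfl), hR,
      pairing_sub_entropicCost_gibbsPlan hK hε w]
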